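/- Let r > 0 and α ∈ (−2, 2) with sin(πα/2) ≠ 0, and suppose there exist coprime integers a, b (necessarily b ≠ 0) and s > 0 with exp(πiα/2) = (1/s)·(a/r + i·b·r). Let c, d ∈ ℤ with ad − bc = 1 and t = ac/r² + b·d·r², and let M = (a b; c d). Then for every Schwartz function f : ℝ → ℂ and every x ∈ ℝ: s^(−1/2)·exp(πi·t·(x/s)²)·(𝓕^α g)(x/s) = 𝓜(M)f(x), where g(y) = r^(−1/2)·f(y/r). (That is, 𝓥_{1/s}𝓦_t 𝓕^α 𝓥_{1/r} = 𝓜(M), where 𝓥_ρ f(x) = √ρ·f(ρx) for ρ > 0 and 𝓦_t f(x) = exp(πi·t·x²)·f(x).) -/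

import Mathlib

/-! Writing `e^{πiα/2} = (a/r + ibr)/s` gives `cos (πα/2) = a/(rs)` and `sin (πα/2) = br/s`.
After the substitution `y ↦ y/r` in the integral defining `𝓜(M)f`, the chirp exponent
`t (x/s)²` plus the fractional Fourier phase becomes `(d x² - 2x (y/r) + a (y/r)²)/b`,
by `ad - bc = 1` and `a²/r² + b²r² = s²`. The normalising constants agree because
`i sin (πα/2) = ib · (r/s)` differs from `ib` by a positive real factor, and principal
powers are multiplicative for such factors. -/

open MeasureTheory

/-- The fractional Fourier transform of a function `f : ℝ → ℂ`, for `α` with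
`sin (πα/2) ≠ 0`, with the square root of positive real part given by the
principal complex power. -/
noncomputable def frFT (α : ℝ) (f : ℝ → ℂ) (x : ℝ) : ℂ :=
  (Complex.I * (Real.sin (Real.pi * α / 2) : ℂ)) ^ (-(1/2) : ℂ) *
    ∫ y : ℝ, Complex.exp ((Real.pi : ℂ) * Complex.I / (Real.sin (Real.pi * α / 2) : ℂ) *
      ((Real.cos (Real.pi * α / 2) * (x ^ 2 + y ^ 2) - 2 * x * y : ℝ) : ℂ)) * f y

/-- The metaplectic operator `𝓜(M)` associated with a real matrix `M = (a b; c d)` with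
`ad - bc = 1`, acting on functions `f : ℝ → ℂ`. -/
noncomputable def metaplectic (a b c d : ℝ) (f : ℝ → ℂ) (x : ℝ) : ℂ :=
  if b ≠ 0 then
    (Complex.I * (b : ℂ)) ^ (-(1/2) : ℂ) *
      ∫ y : ℝ, Complex.exp ((Real.pi : ℂ) * Complex.I / (b : ℂ) *
        ((d * x ^ 2 - 2 * x * y + a * y ^ 2 : ℝ) : ℂ)) * f y
  else if 0 < a then
    (a : ℂ) ^ (-(1/2) : ℂ) * Complex.exp ((Real.pi : ℂ) * Complex.I * ((c / a : ℝ) : ℂ)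
      * ((x : ℂ)) ^ 2) * f (x / a)
  else
    -Complex.I * ((-a : ℝ) : ℂ) ^ (-(1/2) : ℂ) *
      Complex.exp ((Real.pi : ℂ) * Complex.I * ((c / a : ℝ) : ℂ) * ((x : ℂ)) ^ 2) * f (x / a)

lemma Complex.mul_ofReal_cpow {x : ℝ} (hx : 0 < x) (z w : ℂ) :
    (z * x) ^ w = z ^ w * (x : ℂ) ^ w := by
  rcases eq_or_ne z 0 with rfl | hz
  · rcases eq_or_ne w 0 with rfl | hw <;> simp [Complex.zero_cpow, *]
  have hx' : (x : ℂ) ≠ 0 := by exact_mod_cast hx.ne'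
  rw [Complex.cpow_def_of_ne_zero (mul_ne_zero hz hx'), Complex.cpow_def_of_ne_zero hz,
    Complex.cpow_def_of_ne_zero hx', ← Complex.exp_add, ← add_mul,
    Complex.log_mul_ofReal x hx z hz, Complex.ofReal_log hx.le, add_comm]

lemma Complex.ofReal_cpow_neg_half_mul_self {x : ℝ} (hx : 0 < x) :
    (x : ℂ) ^ (-(1/2) : ℂ) * (x : ℂ) ^ (-(1/2) : ℂ) = (x : ℂ)⁻¹ := by
  rw [← Complex.cpow_add _ _ (by exact_mod_cast hx.ne'), ← Complex.cpow_neg_one]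
  norm_num

lemma cos_sin_eq_of_exp_mul_I_eq {θ p q s : ℝ}
    (h : Complex.exp (θ * Complex.I) = (1 / (s : ℂ)) * (p + Complex.I * q)) :
    Real.cos θ = p / s ∧ Real.sin θ = q / s := by
  have hre := congrArg Complex.re h
  have him := congrArg Complex.im h
  rw [Complex.exp_ofReal_mul_I_re] at hre
  rw [Complex.exp_ofReal_mul_I_im] at him
  rw [← Complex.ofReal_one, ← Complex.ofReal_div] at hre him
  simp only [Complex.add_re, Complex.add_im,
    Complex.mul_re, Complex.mul_im, Complex.I_re, Complex.I_im, Complex.ofReal_re,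
    Complex.ofReal_im] at hre him
  constructor <;> [rw [hre]; rw [him]] <;> ring

lemma Complex.ofReal_cpow_mul_mul_ofReal_div_cpow {r s : ℝ} (hr : 0 < r) (hs : 0 < s)
    (z w : ℂ) :
    (s : ℂ) ^ w * (z * ((r / s : ℝ) : ℂ)) ^ w = z ^ w * (r : ℂ) ^ w := by
  rw [Complex.mul_ofReal_cpow (div_pos hr hs), mul_left_comm,
    ← Complex.mul_cpow_ofReal_nonneg hs.le (div_nonneg hr.le hs.le), Complex.ofReal_div,
    mul_div_cancel₀ _ (by exact_mod_cast hs.ne')]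

lemma integral_eq_inv_mul_integral_comp_div (g : ℝ → ℂ) {r : ℝ} (hr : 0 < r) :
    ∫ y, g y = (r : ℂ)⁻¹ * ∫ y, g (y / r) := by
  rw [Measure.integral_comp_div, abs_of_pos hr, Complex.real_smul,
    inv_mul_cancel_left₀ (by exact_mod_cast hr.ne')]

lemma chirp_add_frFT_phase_eq {a b c d r s t x y : ℝ} (hr : r ≠ 0) (hs : s ≠ 0) (hb : b ≠ 0)
    (hdet : a * d - b * c = 1) (hpyth : (a / (r * s)) ^ 2 + (b * r / s) ^ 2 = 1)
    (ht : t = a * c / r ^ 2 + b * d * r ^ 2) :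
    t * (x / s) ^ 2 + (a / (r * s) * ((x / s) ^ 2 + y ^ 2) - 2 * (x / s) * y) / (b * r / s)
      = (d * x ^ 2 - 2 * x * (y / r) + a * (y / r) ^ 2) / b := by
  have hpyth' : a ^ 2 + b ^ 2 * r ^ 4 = s ^ 2 * r ^ 2 := by
    field_simp at hpyth; linear_combination hpyth
  subst ht
  field_simp
  linear_combination (d * x ^ 2) * hpyth' - (a * x ^ 2) * hdet

lemma exp_chirp_mul_exp_frFT_phase_eq {a b c d r s t x y : ℝ} (hr : r ≠ 0) (hs : s ≠ 0)
    (hb : b ≠ 0) (hdet : a * d - b * c = 1) (hpyth : (a / (r * s)) ^ 2 + (b * r / s) ^ 2 = 1)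
    (ht : t = a * c / r ^ 2 + b * d * r ^ 2) :
    Complex.exp (Real.pi * Complex.I * t * ((x / s : ℝ) : ℂ) ^ 2) *
        Complex.exp (Real.pi * Complex.I / ((b * r / s : ℝ) : ℂ) *
          ((a / (r * s) * ((x / s) ^ 2 + y ^ 2) - 2 * (x / s) * y : ℝ) : ℂ))
      = Complex.exp (Real.pi * Complex.I / (b : ℂ) *
          ((d * x ^ 2 - 2 * x * (y / r) + a * (y / r) ^ 2 : ℝ) : ℂ)) := by
  have hphase := congrArg (fun u : ℝ => Real.pi * Complex.I * (u : ℂ))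
    (chirp_add_frFT_phase_eq (x := x) (y := y) hr hs hb hdet hpyth ht)
  rw [← Complex.exp_add]
  congr 1
  push_cast at hphase ⊢
  linear_combination hphase

theorem stmt8_general (r α s t : ℝ) (a b c d : ℤ) (hr : 0 < r)
    (hsin : Real.sin (Real.pi * α / 2) ≠ 0) (hs : 0 < s)
    (hexp : Complex.exp ((Real.pi : ℂ) * Complex.I * (α : ℂ) / 2)
      = (1 / (s : ℂ)) * ((a : ℂ) / (r : ℂ) + Complex.I * (b : ℂ) * (r : ℂ)))
    (hdet : a * d - b * c = 1)
    (ht : t = (a : ℝ) * (c : ℝ) / r ^ 2 + (b : ℝ) * (d : ℝ) * r ^ 2) :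
    ∀ f : SchwartzMap ℝ ℂ, ∀ x : ℝ,
      (s : ℂ) ^ (-(1/2) : ℂ) * Complex.exp ((Real.pi : ℂ) * Complex.I * (t : ℂ)
          * ((x / s : ℝ) : ℂ) ^ 2) *
        frFT α (fun y => (r : ℂ) ^ (-(1/2) : ℂ) * f (y / r)) (x / s)
      = metaplectic (a : ℝ) (b : ℝ) (c : ℝ) (d : ℝ) (⇑f) x := by
  intro f x
  obtain ⟨hcos, hsin'⟩ : Real.cos (Real.pi * α / 2) = a / r / s ∧
      Real.sin (Real.pi * α / 2) = b * r / s := by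
    refine cos_sin_eq_of_exp_mul_I_eq ?_
    convert hexp using 2 <;> push_cast <;> ring
  rw [div_div] at hcos
  have hb : (b : ℝ) ≠ 0 := fun hb => hsin (by rw [hsin', hb, zero_mul, zero_div])
  have hpyth : ((a : ℝ) / (r * s)) ^ 2 + (b * r / s) ^ 2 = 1 := by
    rw [← hcos, ← hsin', Real.cos_sq_add_sin_sq]
  have hdetR : (a : ℝ) * d - b * c = 1 := by exact_mod_cast hdet
  have hconst : (s : ℂ) ^ (-(1/2) : ℂ) * (Complex.I * ((b * r / s : ℝ) : ℂ)) ^ (-(1/2) : ℂ) *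
      (r : ℂ) ^ (-(1/2) : ℂ) = (Complex.I * ((b : ℝ) : ℂ)) ^ (-(1/2) : ℂ) * (r : ℂ)⁻¹ := by
    rw [mul_div_assoc, Complex.ofReal_mul, ← mul_assoc,
      Complex.ofReal_cpow_mul_mul_ofReal_div_cpow hr hs, mul_assoc,
      Complex.ofReal_cpow_neg_half_mul_self hr]
  rw [metaplectic, if_pos hb, frFT, hcos, hsin']
  conv_rhs => rw [integral_eq_inv_mul_integral_comp_div _ hr]
  simp only [← integral_const_mul]
  congr 1 with y
  rw [← exp_chirp_mul_exp_frFT_phase_eq hr.ne' hs.ne' hb hdetR hpyth ht,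
    ← mul_assoc _ (r : ℂ)⁻¹, ← hconst]
  ring

/-- `𝓥_{1/s} 𝓦_t 𝓕^α 𝓥_{1/r} = 𝓜(M)` for `M = (a b; c d) ∈ SL(2,ℤ)` with
`e^{πiα/2} = (a/r + i b r)/s` and `t = ac/r² + bdr²`. -/
theorem stmt8 (r α s t : ℝ) (a b c d : ℤ) (hr : 0 < r) (hα : α ∈ Set.Ioo (-2 : ℝ) 2)
    (hsin : Real.sin (Real.pi * α / 2) ≠ 0) (hab : IsCoprime a b) (hs : 0 < s)
    (hexp : Complex.exp ((Real.pi : ℂ) * Complex.I * (α : ℂ) / 2)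
      = (1 / (s : ℂ)) * ((a : ℂ) / (r : ℂ) + Complex.I * (b : ℂ) * (r : ℂ)))
    (hdet : a * d - b * c = 1)
    (ht : t = (a : ℝ) * (c : ℝ) / r ^ 2 + (b : ℝ) * (d : ℝ) * r ^ 2) :
    ∀ f : SchwartzMap ℝ ℂ, ∀ x : ℝ,
      (s : ℂ) ^ (-(1/2) : ℂ) * Complex.exp ((Real.pi : ℂ) * Complex.I * (t : ℂ)
          * ((x / s : ℝ) : ℂ) ^ 2) *
        frFT α (fun y => (r : ℂ) ^ (-(1/2) : ℂ) * f (y / r)) (x / s)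
      = metaplectic (a : ℝ) (b : ℝ) (c : ℝ) (d : ℝ) (⇑f) x :=
  stmt8_general r α s t a b c d hr hsin hs hexp hdet ht
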